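/- Let W be the unique vector with W·(v₂−v₁) = f₂−f₁ and W·(v₃−v₁) = f₃−f₁, and set W' := K·W. Then the primal 1-form obtained from W' by dotting with the triangle's edges equals the matrix product K^DEC · D₀ · (f₁,f₂,f₃)ᵀ; that is, (W'·w₁, W'·w₂, W'·w₃)ᵀ = K^DEC D₀ (f₁,f₂,f₃)ᵀ, where D₀ is the 3×3 matrix with rows (−1,1,0), (0,−1,1), (1,0,−1) and K^DEC is the 3×3 matrix with rows (0, λ₁, μ₁), (μ₂, 0, λ₂), (λ₃, μ₃, 0). -/

import Mathlib

/-!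
Symmetry of `K` moves it from the flux onto the edges: `(K W)·wᵢ = W·(K wᵢ)`. Expanding `K wᵢ`
in the other two edges turns this into `λᵢ W·wⱼ + μᵢ W·wₖ`, and the pairings `W·wⱼ` are the
edge differences of `f`, i.e. the entries of `D₀ f`.
-/

noncomputable section

/-- Dot product on ℝ². -/
def dot2 (a b : Fin 2 → ℝ) : ℝ := a 0 * b 0 + a 1 * b 1

/-- Determinant of two vectors in ℝ². -/
def det2 (a b : Fin 2 → ℝ) : ℝ := a 0 * b 1 - a 1 * b 0

open Matrix

theorem dot2_eq_dotProduct (a b : Fin 2 → ℝ) : dot2 a b = a ⬝ᵥ b := by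
  simp [dot2, dotProduct, Fin.sum_univ_two]

theorem Matrix.IsSymm.mulVec_dotProduct {R n : Type*} [CommSemiring R] [Fintype n]
    {K : Matrix n n R} (hK : K.IsSymm) (x y : n → R) : K *ᵥ x ⬝ᵥ y = x ⬝ᵥ K *ᵥ y := by
  rw [dotProduct_mulVec, ← mulVec_transpose, hK.eq]

theorem Matrix.IsSymm.mulVec_dotProduct_of_mulVec_eq {R n : Type*} [CommSemiring R] [Fintype n]
    {K : Matrix n n R} (hK : K.IsSymm) (x : n → R) {w u v : n → R} {a b : R}
    (hw : K *ᵥ w = a • u + b • v) : K *ᵥ x ⬝ᵥ w = a * (x ⬝ᵥ u) + b * (x ⬝ᵥ v) := by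
  rw [hK.mulVec_dotProduct, hw, dotProduct_add, dotProduct_smul, dotProduct_smul, smul_eq_mul,
    smul_eq_mul]

theorem coboundary_fin_three_mulVec {R : Type*} [CommRing R] (f₁ f₂ f₃ : R) :
    !![-1, 1, 0; 0, -1, 1; 1, 0, -1] *ᵥ ![f₁, f₂, f₃] = ![f₂ - f₁, f₃ - f₂, f₁ - f₃] := by
  ext i
  fin_cases i <;> simp [mulVec, dotProduct, Fin.sum_univ_three] <;> ring

theorem zeroDiagonal_fin_three_mulVec {R : Type*} [CommSemiring R] (l₁ m₁ l₂ m₂ l₃ m₃ a b c : R) :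
    !![0, l₁, m₁; m₂, 0, l₂; l₃, m₃, 0] *ᵥ ![a, b, c] =
      ![l₁ * b + m₁ * c, l₂ * c + m₂ * a, l₃ * a + m₃ * b] := by
  ext i
  fin_cases i <;> simp [mulVec, dotProduct, Fin.sum_univ_three, add_comm]

theorem dec_anisotropy_on_primal_one_forms_general
    (v₁ v₂ v₃ : Fin 2 → ℝ)
    (w₁ w₂ w₃ : Fin 2 → ℝ)
    (hw₁ : w₁ = v₂ - v₁) (hw₂ : w₂ = v₃ - v₂) (hw₃ : w₃ = v₁ - v₃)
    (K : Matrix (Fin 2) (Fin 2) ℝ) (hK : K.IsSymm)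
    (l₁ m₁ l₂ m₂ l₃ m₃ : ℝ)
    (h₁ : K.mulVec w₁ = l₁ • w₂ + m₁ • w₃)
    (h₂ : K.mulVec w₂ = l₂ • w₃ + m₂ • w₁)
    (h₃ : K.mulVec w₃ = l₃ • w₁ + m₃ • w₂)
    (f₁ f₂ f₃ : ℝ) (W : Fin 2 → ℝ)
    (hW₁ : dot2 W (v₂ - v₁) = f₂ - f₁) (hW₂ : dot2 W (v₃ - v₁) = f₃ - f₁)
    (D₀ : Matrix (Fin 3) (Fin 3) ℝ)
    (hD₀ : D₀ = !![-1, 1, 0; 0, -1, 1; 1, 0, -1])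
    (KDEC : Matrix (Fin 3) (Fin 3) ℝ)
    (hKDEC : KDEC = !![0, l₁, m₁; m₂, 0, l₂; l₃, m₃, 0]) :
    ![dot2 (K.mulVec W) w₁, dot2 (K.mulVec W) w₂, dot2 (K.mulVec W) w₃] =
      (KDEC * D₀).mulVec ![f₁, f₂, f₃] := by
  simp only [dot2_eq_dotProduct] at hW₁ hW₂ ⊢
  have e₁ : W ⬝ᵥ w₁ = f₂ - f₁ := hw₁ ▸ hW₁
  have e₂ : W ⬝ᵥ w₂ = f₃ - f₂ := by
    rw [hw₂, show v₃ - v₂ = (v₃ - v₁) - (v₂ - v₁) by abel, dotProduct_sub, hW₁, hW₂]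
    ring
  have e₃ : W ⬝ᵥ w₃ = f₁ - f₃ := by
    rw [hw₃, show v₁ - v₃ = -(v₃ - v₁) by abel, dotProduct_neg, hW₂]
    ring
  rw [hD₀, hKDEC, ← mulVec_mulVec, coboundary_fin_three_mulVec, zeroDiagonal_fin_three_mulVec,
    hK.mulVec_dotProduct_of_mulVec_eq W h₁, hK.mulVec_dotProduct_of_mulVec_eq W h₂,
    hK.mulVec_dotProduct_of_mulVec_eq W h₃, e₁, e₂, e₃]

/-- The primal 1-form obtained from the anisotropic flux `W' = K·W` by dotting
with the triangle's edges equals `K^DEC · D₀ · (f₁,f₂,f₃)ᵀ`. -/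
theorem dec_anisotropy_on_primal_one_forms
    (v₁ v₂ v₃ : Fin 2 → ℝ)
    (w₁ w₂ w₃ : Fin 2 → ℝ)
    (hw₁ : w₁ = v₂ - v₁) (hw₂ : w₂ = v₃ - v₂) (hw₃ : w₃ = v₁ - v₃)
    (hA : det2 (v₂ - v₁) (v₃ - v₁) ≠ 0)
    (K : Matrix (Fin 2) (Fin 2) ℝ) (hK : K.IsSymm)
    (l₁ m₁ l₂ m₂ l₃ m₃ : ℝ)
    (h₁ : K.mulVec w₁ = l₁ • w₂ + m₁ • w₃)
    (h₂ : K.mulVec w₂ = l₂ • w₃ + m₂ • w₁)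
    (h₃ : K.mulVec w₃ = l₃ • w₁ + m₃ • w₂)
    (f₁ f₂ f₃ : ℝ) (W : Fin 2 → ℝ)
    (hW₁ : dot2 W (v₂ - v₁) = f₂ - f₁) (hW₂ : dot2 W (v₃ - v₁) = f₃ - f₁)
    (D₀ : Matrix (Fin 3) (Fin 3) ℝ)
    (hD₀ : D₀ = !![-1, 1, 0; 0, -1, 1; 1, 0, -1])
    (KDEC : Matrix (Fin 3) (Fin 3) ℝ)
    (hKDEC : KDEC = !![0, l₁, m₁; m₂, 0, l₂; l₃, m₃, 0]) :
    ![dot2 (K.mulVec W) w₁, dot2 (K.mulVec W) w₂, dot2 (K.mulVec W) w₃] =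
      (KDEC * D₀).mulVec ![f₁, f₂, f₃] :=
  dec_anisotropy_on_primal_one_forms_general v₁ v₂ v₃ w₁ w₂ w₃ hw₁ hw₂ hw₃ K hK l₁ m₁ l₂ m₂ l₃ m₃ h₁
    h₂ h₃ f₁ f₂ f₃ W hW₁ hW₂ D₀ hD₀ KDEC hKDEC
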